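/- arXiv:2406.07517 — 2 statements merged into one kernel-verified Lean document; each statement's English description precedes it below -/
import Mathlib

section
/- Let S be a commutative ring, I ⊆ S an ideal minimally generated by m elements with a free resolution 0 → S^{m−1} →(φ) S^m →(ε) I → 0 where, by Hilbert–Burch, I = a·I_{m−1}(φ) for some nonzerodivisor a and ε sends the i-th basis vector to (−1)^i a times the (m−1)-minor of φ omitting row i. Set R = S/I, let ψ = φ ⊗ id_R : R^{m−1} → R^m, and let C = ker ψ. Then for every subset A ⊆ {1,...,m} with |A| = m−2, the element c_A = Σ_{j=1}^{m−1} (−1)^{j+1} a·[A | {1,...,m−1}∖{j}] · f_j lies in C, where [A|B] denotes the minor of (a matrix of) φ with rows A and columns B, reduced mod I, and f_1,...,f_{m−1} is the standard basis of R^{m−1}. Consequently a·I_{m−2}(ψ) ⊆ I_1(C → R^{m−1}), the ideal generated by all coordinates of elements of C. -/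
open RingTheory.Sequence

/-- The grade (depth) of an ideal `J` on the ring `S`: the supremum of lengths of
regular sequences contained in `J`. -/
noncomputable def idealGrade {S : Type*} [CommRing S] (J : Ideal S) : ℕ∞ :=
  sSup {n : ℕ∞ | ∃ rs : List S, (rs.length : ℕ∞) = n ∧ (∀ r ∈ rs, r ∈ J) ∧
    RingTheory.Sequence.IsRegular S rs}

/-- The height of an ideal: the infimum of the heights (in the prime spectrum)
of the primes minimal over it. -/
noncomputable def idealHeight {S : Type*} [CommRing S] (I : Ideal S) : ℕ∞ :=
  sInf {n : ℕ∞ | ∃ p : PrimeSpectrum S, p.asIdeal ∈ I.minimalPrimes ∧ Order.height p = n}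

/-- The depth of a (semi)local ring along its Jacobson radical. -/
noncomputable def ringDepth (A : Type*) [CommRing A] : ℕ∞ :=
  sSup {n : ℕ∞ | ∃ rs : List A, (rs.length : ℕ∞) = n ∧
    (∀ r ∈ rs, r ∈ (⊥ : Ideal A).jacobson) ∧ RingTheory.Sequence.IsRegular A rs}

/-- A (local) ring is Cohen–Macaulay if its depth equals its Krull dimension. -/
def IsCohenMacaulayLocalRing (A : Type*) [CommRing A] : Prop :=
  ((ringDepth A : WithBot ℕ∞) = ringKrullDim A)

/-- A ring is Cohen–Macaulay if all its localizations at maximal ideals are. -/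
def IsCohenMacaulayRing (A : Type*) [CommRing A] : Prop :=
  ∀ (P : Ideal A) (_ : P.IsMaximal), IsCohenMacaulayLocalRing (Localization.AtPrime P)

/-- The socle of a (local) ring: the annihilator of the Jacobson radical. -/
noncomputable def ringSocle (A : Type*) [CommRing A] : Ideal A :=
  Submodule.colon ⊥ (((⊥ : Ideal A).jacobson : Ideal A) : Set A)

/-- A Noetherian local ring is Gorenstein iff some regular sequence of length equal
to the Krull dimension, contained in the maximal ideal (= Jacobson radical), yields a
quotient with nonzero principal (i.e. one-dimensional) socle. -/
def IsGorensteinLocalRing (A : Type*) [CommRing A] : Prop :=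
  IsNoetherianRing A ∧ ∃ rs : List A,
    (∀ r ∈ rs, r ∈ (⊥ : Ideal A).jacobson) ∧ RingTheory.Sequence.IsRegular A rs ∧
    ((rs.length : ℕ∞) : WithBot ℕ∞) = ringKrullDim A ∧
    ∃ x : A ⧸ Ideal.span {r : A | r ∈ rs}, x ≠ 0 ∧
      ringSocle (A ⧸ Ideal.span {r : A | r ∈ rs}) = Ideal.span {x}

/-- A ring is Gorenstein if all its localizations at maximal ideals are. -/
def IsGorensteinRing (A : Type*) [CommRing A] : Prop :=
  ∀ (P : Ideal A) (_ : P.IsMaximal), IsGorensteinLocalRing (Localization.AtPrime P)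

/-- `I` is generically Gorenstein: `S_P/I_P` is Gorenstein for all minimal primes `P` of `I`. -/
def GenericallyGorenstein {S : Type*} [CommRing S] (I : Ideal S) : Prop :=
  ∀ (P : Ideal S) (_ : P.IsPrime), P ∈ I.minimalPrimes →
    IsGorensteinLocalRing
      (Localization.AtPrime P ⧸ I.map (algebraMap S (Localization.AtPrime P)))

/-- `I` is generically a complete intersection: `I_P` is generated by a regular sequence
for all minimal primes `P` of `I`. -/
def GenericallyCompleteIntersection {S : Type*} [CommRing S] (I : Ideal S) : Prop :=
  ∀ (P : Ideal S) (_ : P.IsPrime), P ∈ I.minimalPrimes →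
    ∃ rs : List (Localization.AtPrime P),
      RingTheory.Sequence.IsRegular (Localization.AtPrime P) rs ∧
      Ideal.span {r | r ∈ rs} = I.map (algebraMap S (Localization.AtPrime P))

/-- The minor of `M` with rows `A` and columns `B` (both of size `k`). -/
noncomputable def fminor {S : Type*} [CommRing S] {p q : ℕ} (k : ℕ)
    (M : Matrix (Fin p) (Fin q) S) (A : Finset (Fin p)) (B : Finset (Fin q))
    (hA : A.card = k) (hB : B.card = k) : S :=
  (M.submatrix (fun i => ((A.orderIsoOfFin hA i : A) : Fin p))
    (fun j => ((B.orderIsoOfFin hB j : B) : Fin q))).det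

/-- The ideal of `k × k` minors of a matrix. -/
noncomputable def minorsIdeal {S : Type*} [CommRing S] {p q : ℕ}
    (M : Matrix (Fin p) (Fin q) S) (k : ℕ) : Ideal S :=
  Ideal.span {d | ∃ (A : Finset (Fin p)) (B : Finset (Fin q))
    (hA : A.card = k) (hB : B.card = k), d = fminor k M A B hA hB}

/-- The linear map `(f₁,…,fₘ) ↦ ∑ fᵢ hᵢ`. -/
noncomputable def sfun {S : Type*} [CommRing S] {m : ℕ} (h : Fin m → S) :
    (Fin m → S) →ₗ[S] S where
  toFun f := ∑ i, f i * h i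
  map_add' f g := by simp [add_mul, Finset.sum_add_distrib]
  map_smul' r f := by simp [Finset.mul_sum, mul_assoc]

/-- The bidiagonal Hilbert–Burch matrix associated to exponent sequences `a`, `b`. -/
noncomputable def hbMatrix {K : Type*} [Field K] {n : ℕ} (a b : Fin (n+1) → ℕ) :
    Matrix (Fin (n+1)) (Fin n) (MvPolynomial (Fin 2) K) :=
  fun i j =>
    if i = j.castSucc then (MvPolynomial.X 1) ^ (b j.succ - b j.castSucc)
    else if i = j.succ then - (MvPolynomial.X 0) ^ (a j.castSucc - a j.succ)
    else 0

/-- The trace ideal of a module. -/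
noncomputable def traceIdeal (R : Type*) [CommRing R] (M : Type*) [AddCommGroup M]
    [Module R M] : Ideal R :=
  ⨆ φ : M →ₗ[R] R, LinearMap.range φ

/-- The ideal generated by the coordinates of all elements of the kernel of `ψ`. -/
noncomputable def kerCoordIdeal {R : Type*} [CommRing R] {p q : ℕ}
    (ψ : (Fin q → R) →ₗ[R] (Fin p → R)) : Ideal R :=
  Ideal.span {r : R | ∃ v ∈ LinearMap.ker ψ, ∃ j, v j = r}

section Aux2
variable {S : Type*} [CommRing S]


lemma cols_compl_eq {k : ℕ} (j : Fin (k+1)) (hB : ({j}ᶜ : Finset (Fin (k+1))).card = k) :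
    (fun x : Fin k => ((({j}ᶜ : Finset (Fin (k+1))).orderIsoOfFin hB x :
      ({j}ᶜ : Finset (Fin (k+1)))) : Fin (k+1))) = j.succAbove := by
  have h := Finset.orderEmbOfFin_unique hB (f := fun x : Fin k => j.succAbove x)
    (fun x => by simp [Fin.succAbove_ne]) (Fin.strictMono_succAbove j)
  funext x
  rw [Finset.coe_orderIsoOfFin_apply, ← h]

lemma fminor_map {T : Type*} [CommRing T] {p q k : ℕ} (f : S →+* T)
    (M : Matrix (Fin p) (Fin q) S) (A : Finset (Fin p)) (B : Finset (Fin q))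
    (hA : A.card = k) (hB : B.card = k) :
    fminor k (M.map f) A B hA hB = f (fminor k M A B hA hB) := by
  unfold fminor
  rw [RingHom.map_det, RingHom.mapMatrix_apply, Matrix.submatrix_map]

lemma key {k : ℕ} (M : Matrix (Fin (k+2)) (Fin (k+1)) S) (a : S)
    (A : Finset (Fin (k+2))) (hA : A.card = k) (i : Fin (k+2)) :
    ∑ j : Fin (k+1), M i j * ((-1:S)^((j:ℕ)+1) * a *
      fminor k M A ({j}ᶜ) hA (by simp [Finset.card_compl])) ∈
      Ideal.span {a} * minorsIdeal M (k+1) := by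
  set rows : Fin (k+1) → Fin (k+2) :=
    Fin.cons i (fun t => ((A.orderIsoOfFin hA t : A) : Fin (k+2))) with hrows
  set N : Matrix (Fin (k+1)) (Fin (k+1)) S := M.submatrix rows id with hN
  have hf : ∀ (j : Fin (k+1)) (hB : ({j}ᶜ : Finset (Fin (k+1))).card = k),
      fminor k M A ({j}ᶜ) hA hB = (N.submatrix Fin.succ j.succAbove).det := by
    intro j hB
    unfold fminor
    rw [cols_compl_eq j hB]
    have : (fun t : Fin k => ((A.orderIsoOfFin hA t : A) : Fin (k+2))) = rows ∘ Fin.succ := by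
      funext t; simp [hrows, Fin.cons_succ]
    rw [this, hN, Matrix.submatrix_submatrix]
    rfl
  have hsum : ∑ j : Fin (k+1), M i j * ((-1:S)^((j:ℕ)+1) * a *
      fminor k M A ({j}ᶜ) hA (by simp [Finset.card_compl])) = -(a * N.det) := by
    rw [Matrix.det_succ_row_zero, Finset.mul_sum, ← Finset.sum_neg_distrib]
    refine Finset.sum_congr rfl fun j _ => ?_
    rw [hf j]
    have h0 : N 0 j = M i j := by simp [hN, hrows]
    rw [h0]
    ring
  rw [hsum]
  have hmain : a * N.det ∈ Ideal.span {a} * minorsIdeal M (k+1) := by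
    by_cases hi : i ∈ A
    · have hdet : N.det = 0 := by
        refine Matrix.det_zero_of_row_eq (i := 0)
          (j := Fin.succ ((A.orderIsoOfFin hA).symm ⟨i, hi⟩)) (Fin.succ_ne_zero _).symm ?_
        funext s
        simp only [hN, hrows, Matrix.submatrix_apply, Fin.cons_succ, Fin.cons_zero, id]
        rw [OrderIso.apply_symm_apply]
      rw [hdet, mul_zero]; exact zero_mem _
    · have hA' : (insert i A).card = k + 1 := by
        rw [Finset.card_insert_of_notMem hi, hA]
      set rows' : Fin (k+1) → Fin (k+2) :=
        fun t => (((insert i A).orderIsoOfFin hA' t : (insert i A : Finset _)) : Fin (k+2))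
        with hrows'
      have hmem : ∀ r, rows r ∈ insert i A := by
        intro r
        refine Fin.cases ?_ (fun t => ?_) r
        · simp [hrows]
        · simp only [hrows, Fin.cons_succ]
          exact Finset.mem_insert_of_mem (Finset.coe_mem _)
      have hrowinj : Function.Injective rows := by
        have hne : ∀ t : Fin k, rows (Fin.succ t) ≠ i := by
          intro t h
          exact hi (h ▸ Finset.coe_mem (A.orderIsoOfFin hA t))
        intro r s h
        induction r using Fin.cases with
        | zero =>
          induction s using Fin.cases with
          | zero => rfl
          | succ t =>
            exact absurd (h.symm.trans (by simp [hrows, Fin.cons_zero])) (hne t)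
        | succ t =>
          induction s using Fin.cases with
          | zero =>
            exact absurd (h.trans (by simp [hrows, Fin.cons_zero])) (hne t)
          | succ u =>
            simp only [hrows, Fin.cons_succ] at h
            have := (A.orderIsoOfFin hA).injective (Subtype.ext h)
            rw [this]
      have hσinj : Function.Injective (fun r =>
          ((insert i A).orderIsoOfFin hA').symm ⟨rows r, hmem r⟩) := by
        intro r s h
        apply hrowinj
        have := congrArg (fun x => (((insert i A).orderIsoOfFin hA') x : Fin (k+2))) h
        simpa using this
      set σ : Equiv.Perm (Fin (k+1)) :=
        Equiv.ofBijective _ (Finite.injective_iff_bijective.mp hσinj) with hσ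
      have hNs : N = (M.submatrix rows' id).submatrix (⇑σ) id := by
        ext r j
        simp only [hN, Matrix.submatrix_apply, id]
        congr 1
        show rows r = rows' (σ r)
        simp only [hσ, Equiv.ofBijective_apply, hrows']
        rw [OrderIso.apply_symm_apply]
      have hcolsu : (fun x : Fin (k+1) =>
          (((Finset.univ : Finset (Fin (k+1))).orderIsoOfFin (by simp) x :
            (Finset.univ : Finset (Fin (k+1)))) : Fin (k+1))) = id := by
        funext x
        rw [Finset.coe_orderIsoOfFin_apply,
          ← Finset.orderEmbOfFin_unique (by simp : (Finset.univ : Finset (Fin (k+1))).card = k+1)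
            (f := fun x : Fin (k+1) => x) (fun x => Finset.mem_univ x) strictMono_id]
        rfl
      have hfm : fminor (k+1) M (insert i A) Finset.univ hA' (by simp) =
          (M.submatrix rows' id).det := by
        unfold fminor
        rw [hcolsu]
      have hgen : a * fminor (k+1) M (insert i A) Finset.univ hA' (by simp) ∈
          Ideal.span {a} * minorsIdeal M (k+1) := by
        refine Ideal.mul_mem_mul (Ideal.subset_span rfl) (Ideal.subset_span ?_)
        exact ⟨insert i A, Finset.univ, hA', by simp, rfl⟩
      rw [hNs, Matrix.det_permute, ← hfm]
      rcases Int.units_eq_one_or (Equiv.Perm.sign σ) with hs | hs <;> rw [hs]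
      · simpa using hgen
      · push_cast
        rw [neg_one_mul, mul_neg]
        exact neg_mem hgen
  exact neg_mem hmain
end Aux2

/-- **Lemma 2.3.** In the Hilbert–Burch situation `I = a·I_{m-1}(φ)`, the elements `c_A`
lie in `C = ker ψ`, so `a·I_{m-2}(ψ) ⊆ I_1(α)`. -/
theorem stmt8 {S : Type*} [CommRing S] (n : ℕ) (hn : 1 ≤ n)
    (M : Matrix (Fin (n + 1)) (Fin n) S) (a : S) (ha : a ∈ nonZeroDivisors S)
    (hmin : ∀ G : Finset S,
      Ideal.span (G : Set S) = Ideal.span {a} * minorsIdeal M n → n + 1 ≤ G.card)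
    (hinj : Function.Injective M.mulVecLin)
    (hres : LinearMap.range M.mulVecLin = LinearMap.ker (sfun fun i : Fin (n + 1) =>
      (-1 : S) ^ (i : ℕ) * a * (M.submatrix i.succAbove id).det))
    (hsur : LinearMap.range (sfun fun i : Fin (n + 1) =>
      (-1 : S) ^ (i : ℕ) * a * (M.submatrix i.succAbove id).det) =
      Ideal.span {a} * minorsIdeal M n) :
    (∀ (A : Finset (Fin (n + 1))) (hA : A.card = n - 1),
      (fun j : Fin n =>
        (-1 : S ⧸ (Ideal.span {a} * minorsIdeal M n)) ^ ((j : ℕ) + 1) *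
          Ideal.Quotient.mk (Ideal.span {a} * minorsIdeal M n) a *
          fminor (n - 1) (M.map (Ideal.Quotient.mk (Ideal.span {a} * minorsIdeal M n)))
            A ({j}ᶜ) hA (by simp [Finset.card_compl])) ∈
        LinearMap.ker (M.map (Ideal.Quotient.mk (Ideal.span {a} * minorsIdeal M n))).mulVecLin) ∧
    Ideal.span {Ideal.Quotient.mk (Ideal.span {a} * minorsIdeal M n) a} *
        minorsIdeal (M.map (Ideal.Quotient.mk (Ideal.span {a} * minorsIdeal M n))) (n - 1) ≤
      kerCoordIdeal (M.map (Ideal.Quotient.mk (Ideal.span {a} * minorsIdeal M n))).mulVecLin := by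
  obtain ⟨k, rfl⟩ : ∃ k, n = k + 1 := ⟨n - 1, (Nat.succ_pred_eq_of_pos hn).symm⟩
  set I : Ideal S := Ideal.span {a} * minorsIdeal M (k+1) with hI
  set mk : S →+* S ⧸ I := Ideal.Quotient.mk I with hmk
  have part1 : ∀ (A : Finset (Fin (k + 1 + 1))) (hA : A.card = k + 1 - 1),
      (fun j : Fin (k+1) =>
        (-1 : S ⧸ I) ^ ((j : ℕ) + 1) * mk a *
          fminor (k + 1 - 1) (M.map mk) A ({j}ᶜ) hA (by simp [Finset.card_compl])) ∈
        LinearMap.ker (M.map mk).mulVecLin := by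
    intro A hA
    rw [LinearMap.mem_ker]
    funext i
    simp only [Matrix.mulVecLin_apply, Matrix.mulVec, dotProduct, Matrix.map_apply,
      Pi.zero_apply]
    have step : ∀ j : Fin (k+1),
        mk (M i j) * ((-1 : S ⧸ I) ^ ((j : ℕ) + 1) * mk a *
          fminor (k + 1 - 1) (M.map mk) A ({j}ᶜ) hA (by simp [Finset.card_compl])) =
        mk (M i j * ((-1:S)^((j:ℕ)+1) * a *
          fminor k M A ({j}ᶜ) hA (by simp [Finset.card_compl]))) := by
      intro j
      rw [fminor_map]
      simp [map_mul, map_pow]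
    rw [Finset.sum_congr rfl fun j _ => step j, ← map_sum,
      Ideal.Quotient.eq_zero_iff_mem]
    exact key M a A hA i
  refine ⟨part1, ?_⟩
  rw [Ideal.mul_le]
  intro r hr s hs
  rw [Ideal.mem_span_singleton] at hr
  obtain ⟨c, rfl⟩ := hr
  have h2 : mk a * s ∈ kerCoordIdeal (M.map mk).mulVecLin := by
    refine Submodule.span_induction ?_ ?_ ?_ ?_ hs
    · rintro d ⟨A, B, hA, hB, rfl⟩
      have hcard : Bᶜ.card = 1 := by
        rw [Finset.card_compl, hB]
        simp
      obtain ⟨j, hj⟩ := Finset.card_eq_one.mp hcard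
      have hBj : B = {j}ᶜ := by rw [← compl_compl B, hj]
      subst hBj
      have hx0 : ((-1 : S ⧸ I) ^ ((j : ℕ) + 1) * mk a *
          fminor (k + 1 - 1) (M.map mk) A ({j}ᶜ) hA (by simp [Finset.card_compl])) ∈
          kerCoordIdeal (M.map mk).mulVecLin :=
        Ideal.subset_span ⟨_, part1 A hA, j, rfl⟩
      have he : ((-1 : S ⧸ I) ^ ((j:ℕ)+1)) * ((-1 : S ⧸ I) ^ ((j:ℕ)+1)) = 1 := by
        rw [← pow_add]
        exact Even.neg_one_pow ⟨(j:ℕ)+1, rfl⟩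
      have key2 : mk a * fminor (k + 1 - 1) (M.map mk) A ({j}ᶜ) hA hB =
          (-1 : S ⧸ I) ^ ((j:ℕ)+1) * ((-1 : S ⧸ I) ^ ((j:ℕ)+1) * mk a *
            fminor (k + 1 - 1) (M.map mk) A ({j}ᶜ) hA hB) := by
        calc mk a * fminor (k + 1 - 1) (M.map mk) A ({j}ᶜ) hA hB
            = ((-1 : S ⧸ I) ^ ((j:ℕ)+1) * (-1 : S ⧸ I) ^ ((j:ℕ)+1) * mk a) *
              fminor (k + 1 - 1) (M.map mk) A ({j}ᶜ) hA hB := by rw [he, one_mul]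
          _ = _ := by ring
      rw [key2]
      exact Ideal.mul_mem_left _ _ hx0
    · rw [mul_zero]; exact zero_mem _
    · intro x y _ _ hx hy
      rw [mul_add]; exact add_mem hx hy
    · intro c x _ hx
      rw [smul_eq_mul, mul_left_comm]
      exact Ideal.mul_mem_left _ _ hx
  rw [mul_comm (mk a) c, mul_assoc]
  exact Ideal.mul_mem_left _ c h2
end

section
/- Let S = K[x,y] and let I be a monomial ideal such that R = S/I is Cohen–Macaulay with μ(I) = m ≥ 2, so I = (x^{a_1}y^{b_1},...,x^{a_m}y^{b_m}) with a_1 > ... > a_m = 0 and 0 = b_1 < ... < b_m. Suppose R is nearly Gorenstein (tr(ω_R) ⊇ (x,y)R). Then m ≤ 3. -/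
open RingTheory.Sequence

/-- The monomial ideal `(x^{a_1}y^{b_1}, …, x^{a_m}y^{b_m})` of `K[x,y]`. -/
noncomputable def monIdeal (K : Type*) [Field K] {m : ℕ} (a b : Fin m → ℕ) :
    Ideal (MvPolynomial (Fin 2) K) :=
  Ideal.span {u | ∃ i, u = (MvPolynomial.X 0 : MvPolynomial (Fin 2) K) ^ a i *
    MvPolynomial.X 1 ^ b i}

/-- The Matlis dual `Hom_K(R,K)` of a `K`-algebra `R`, as an `R`-module
(`r • φ = φ ∘ (r·)`). For an Artinian local `K`-algebra with residue field `K`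
this is the canonical module `ω_R`. -/
noncomputable instance dualModule (K R : Type*) [Field K] [CommRing R] [Algebra K R] :
    Module R (Module.Dual K R) :=
  { smul := fun r φ => φ ∘ₗ LinearMap.mulLeft K r
    one_smul := fun φ => by ext x; show φ (1 * x) = φ x; rw [one_mul]
    mul_smul := fun r s φ => by
      ext x
      show φ (r * s * x) = φ (s * (r * x))
      congr 1; ring
    smul_zero := fun r => by ext x; show (0 : Module.Dual K R) (r * x) = 0; rfl
    smul_add := fun r φ ψ => by ext x; show (φ + ψ) (r * x) = φ (r * x) + ψ (r * x); rfl
    add_smul := fun r s φ => by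
      ext x
      show φ ((r + s) * x) = φ (r * x) + φ (s * x)
      rw [add_mul, map_add]
    zero_smul := fun φ => by ext x; show φ (0 * x) = 0; rw [zero_mul, map_zero] }



/-- The canonical trace of the (Artinian) quotient `K[x₁,…]⧸I`: the trace ideal of the
Matlis dual `Hom_K(R,K)`, which is the canonical module of a zero-dimensional algebra. -/
noncomputable def canTrace (K : Type*) [Field K] {n : ℕ} (I : Ideal (MvPolynomial (Fin n) K)) :
    Ideal (MvPolynomial (Fin n) K ⧸ I) :=
  traceIdeal _ (Module.Dual K (MvPolynomial (Fin n) K ⧸ I))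

set_option synthInstance.maxHeartbeats 1000000
set_option maxHeartbeats 2000000
set_option linter.unusedSectionVars false
set_option linter.unusedVariables false

section StAux
open MvPolynomial

namespace St

/-- the exponent vector (c,d) -/
noncomputable def pt (c d : ℕ) : Fin 2 →₀ ℕ := Finsupp.single 0 c + Finsupp.single 1 d

@[simp] lemma pt_apply0 (c d : ℕ) : pt c d 0 = c := by simp [pt]
@[simp] lemma pt_apply1 (c d : ℕ) : pt c d 1 = d := by simp [pt, Finsupp.single_apply]

lemma finsupp_eq_iff (u v : Fin 2 →₀ ℕ) : u = v ↔ u 0 = v 0 ∧ u 1 = v 1 := by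
  constructor
  · rintro rfl; exact ⟨rfl, rfl⟩
  · rintro ⟨h0, h1⟩
    ext i
    match i with
    | 0 => exact h0
    | 1 => exact h1

lemma eq_pt (u : Fin 2 →₀ ℕ) : u = pt (u 0) (u 1) := by
  rw [finsupp_eq_iff]; simp

lemma X_pow_mul_X_pow (K : Type*) [Field K] (c d : ℕ) :
    (X 0 : MvPolynomial (Fin 2) K) ^ c * X 1 ^ d = monomial (pt c d) 1 := by
  rw [X_pow_eq_monomial, X_pow_eq_monomial, monomial_mul, one_mul, pt]

variable {K : Type*} [Field K] {n : ℕ} (a b : Fin (n+1) → ℕ)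

lemma mem_monIdeal_iff (f : MvPolynomial (Fin 2) K) :
    f ∈ monIdeal K a b ↔ ∀ u ∈ f.support, ∃ i, a i ≤ u 0 ∧ b i ≤ u 1 := by
  constructor
  · intro hf
    refine Submodule.span_induction ?_ ?_ ?_ ?_ hf
    · rintro g ⟨i, rfl⟩ u hu
      classical
      rw [X_pow_mul_X_pow, support_monomial] at hu
      rw [if_neg (one_ne_zero), Finset.mem_singleton] at hu
      subst hu
      exact ⟨i, by simp⟩
    · intro u hu; simp at hu
    · intro g h _ _ hg hh u hu
      rcases Finset.mem_union.1 (MvPolynomial.support_add hu) with h' | h'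
      · exact hg u h'
      · exact hh u h'
    · intro r g _ hg u hu
      rcases Finset.mem_add.1 (MvPolynomial.support_mul r g hu) with ⟨v, hv, w, hw, rfl⟩
      obtain ⟨i, h1, h2⟩ := hg w hw
      exact ⟨i, by simp [h1, h2, le_add_left h1, Finsupp.add_apply]; omega⟩
  · intro h
    rw [f.as_sum]
    refine Ideal.sum_mem _ fun u hu => ?_
    obtain ⟨i, h1, h2⟩ := h u hu
    have he : u - pt (a i) (b i) + pt (a i) (b i) = u := by
      rw [finsupp_eq_iff]
      simp only [Finsupp.add_apply, Finsupp.tsub_apply, pt_apply0, pt_apply1]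
      omega
    have : (monomial u) (coeff u f) =
        (monomial (u - pt (a i) (b i)) (coeff u f)) * ((X 0 : MvPolynomial (Fin 2) K) ^ a i * X 1 ^ b i) := by
      rw [X_pow_mul_X_pow, monomial_mul, mul_one, he]
    rw [this]
    exact Ideal.mul_mem_left _ _ (Ideal.subset_span ⟨i, rfl⟩)

end St

set_option synthInstance.maxHeartbeats 1000000
set_option maxHeartbeats 2000000
section chunk2
open MvPolynomial
namespace St
variable {K : Type*} [Field K] {n : ℕ} (a b : Fin (n+1) → ℕ)

/-- The standard monomials: complement of the staircase. -/
def Dlt : Set (Fin 2 →₀ ℕ) := {u | ∀ i, u 0 < a i ∨ u 1 < b i}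

lemma not_mem_Dlt {u : Fin 2 →₀ ℕ} : u ∉ Dlt a b ↔ ∃ i, a i ≤ u 0 ∧ b i ≤ u 1 := by
  simp [Dlt, not_or, not_lt]

lemma mk_monomial_eq_zero {u : Fin 2 →₀ ℕ} (hu : u ∉ Dlt a b) (c : K) :
    Ideal.Quotient.mk (monIdeal K a b) (monomial u c) = 0 := by
  rw [Ideal.Quotient.eq_zero_iff_mem, mem_monIdeal_iff]
  intro w hw
  classical
  rw [support_monomial] at hw
  rcases eq_or_ne c 0 with rfl | hc
  · simp at hw
  · rw [if_neg hc, Finset.mem_singleton] at hw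
    subst hw
    exact (not_mem_Dlt a b).1 hu

lemma support_subset_of_mem_span {p : MvPolynomial (Fin 2) K}
    (hp : p ∈ Submodule.span K (Set.range (fun u : Dlt a b =>
      (monomial u.1 1 : MvPolynomial (Fin 2) K)))) :
    (p.support : Set (Fin 2 →₀ ℕ)) ⊆ Dlt a b := by
  classical
  refine Submodule.span_induction ?_ ?_ ?_ ?_ hp
  · rintro g ⟨u, rfl⟩ w hw
    simp only [Finset.coe_subset, support_monomial] at hw
    rw [if_neg one_ne_zero, Finset.coe_singleton, Set.mem_singleton_iff] at hw
    subst hw; exact u.2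
  · simp
  · intro g h _ _ hg hh w hw
    rcases Finset.mem_union.1 (MvPolynomial.support_add hw) with h' | h'
    · exact hg h'
    · exact hh h'
  · intro c g _ hg w hw
    exact hg (MvPolynomial.support_smul hw)

noncomputable def bas : Module.Basis (Dlt a b) K (MvPolynomial (Fin 2) K ⧸ monIdeal K a b) := by
  refine Module.Basis.mk (v := fun u : Dlt a b =>
    Ideal.Quotient.mk (monIdeal K a b) (monomial u.1 1)) ?_ ?_
  · have h1 : LinearIndependent K (fun u : Dlt a b => (monomial u.1 1 : MvPolynomial (Fin 2) K)) := by
      have := (basisMonomials (Fin 2) K).linearIndependent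
      rw [coe_basisMonomials] at this
      exact this.comp Subtype.val Subtype.val_injective
    have h2 := h1.map (f := (Ideal.Quotient.mkₐ K (monIdeal K a b)).toLinearMap) ?_
    · exact h2
    · rw [Submodule.disjoint_def]
      intro p hp hker
      have hsupp := support_subset_of_mem_span a b hp
      have hmem : p ∈ monIdeal K a b := by
        rwa [LinearMap.mem_ker, AlgHom.toLinearMap_apply, Ideal.Quotient.mkₐ_eq_mk,
          Ideal.Quotient.eq_zero_iff_mem] at hker
      rw [mem_monIdeal_iff] at hmem
      rw [← MvPolynomial.support_eq_empty, Finset.eq_empty_iff_forall_notMem]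
      intro w hw
      obtain ⟨i, h1', h2'⟩ := hmem w hw
      have := hsupp hw i
      omega
  · rintro x -
    obtain ⟨p, rfl⟩ := Ideal.Quotient.mk_surjective x
    rw [p.as_sum, map_sum]
    refine Submodule.sum_mem _ fun u hu => ?_
    by_cases h : u ∈ Dlt a b
    · have h0 : (monomial u (coeff u p) : MvPolynomial (Fin 2) K) =
          (coeff u p) • monomial u 1 := by simp [smul_monomial]
      rw [h0, ← Ideal.Quotient.mkₐ_eq_mk K, map_smul]
      refine Submodule.smul_mem _ _ (Submodule.subset_span ⟨⟨u, h⟩, ?_⟩)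
      rw [Ideal.Quotient.mkₐ_eq_mk]
    · rw [mk_monomial_eq_zero a b h]
      exact Submodule.zero_mem _

lemma bas_apply (u : Dlt a b) :
    bas a b u = Ideal.Quotient.mk (monIdeal K a b) (monomial u.1 1) :=
  Module.Basis.mk_apply _ _ _

end St
end chunk2

section chunk3
open MvPolynomial
namespace St
variable {K : Type*} [Field K] {n : ℕ} (a b : Fin (n+1) → ℕ)

lemma dual_smul_apply (r x : MvPolynomial (Fin 2) K ⧸ monIdeal K a b)
    (φ : Module.Dual K (MvPolynomial (Fin 2) K ⧸ monIdeal K a b)) :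
    (r • φ) x = φ (r * x) := rfl

lemma Dlt_finite (hA : a (Fin.last n) = 0) (hB : b 0 = 0) : (Dlt a b).Finite := by
  have hsub : Dlt a b ⊆ {u | u 0 < a 0 ∧ u 1 < b (Fin.last n)} := by
    intro u hu
    refine ⟨?_, ?_⟩
    · rcases hu 0 with h | h
      · exact h
      · rw [hB] at h; omega
    · rcases hu (Fin.last n) with h | h
      · rw [hA] at h; omega
      · exact h
  have hfin : ({u : Fin 2 →₀ ℕ | u 0 < a 0 ∧ u 1 < b (Fin.last n)}).Finite := by
    apply Set.Finite.of_finite_image (f := fun u => (u 0, u 1))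
    · apply Set.Finite.subset (Set.finite_Iio (a 0) |>.prod (Set.finite_Iio (b (Fin.last n))))
      rintro ⟨x, y⟩ ⟨u, hu, heq⟩
      simp only [Prod.mk.injEq] at heq
      exact ⟨heq.1 ▸ hu.1, heq.2 ▸ hu.2⟩
    · intro u _ v _ h
      rw [Prod.mk.injEq] at h
      rw [finsupp_eq_iff]
      exact h
  exact hfin.subset hsub

open Classical in
/-- The dual functional of a standard monomial (0 if not standard). -/
noncomputable def E (u : Fin 2 →₀ ℕ) :
    Module.Dual K (MvPolynomial (Fin 2) K ⧸ monIdeal K a b) :=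
  if h : u ∈ Dlt a b then (bas a b).coord ⟨u, h⟩ else 0

lemma Dlt_sub {u : Fin 2 →₀ ℕ} (hu : u ∈ Dlt a b) (p : Fin 2 →₀ ℕ) : u - p ∈ Dlt a b := by
  intro i
  rcases hu i with h | h
  · left; rw [Finsupp.tsub_apply]; omega
  · right; rw [Finsupp.tsub_apply]; omega

lemma E_apply_bas {u : Fin 2 →₀ ℕ} (hu : u ∈ Dlt a b) (w : Dlt a b) :
    E (K := K) a b u (bas a b w) = if u = w.1 then 1 else 0 := by
  classical
  rw [E, dif_pos hu, Module.Basis.coord_apply, Module.Basis.repr_self, Finsupp.single_apply]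
  simp [Subtype.ext_iff, eq_comm]

lemma smul_E (p : Fin 2 →₀ ℕ) {u : Fin 2 →₀ ℕ} (hu : u ∈ Dlt a b) :
    (Ideal.Quotient.mk (monIdeal K a b) (monomial p 1)) • E (K := K) a b u =
      if p 0 ≤ u 0 ∧ p 1 ≤ u 1 then E (K := K) a b (u - p) else 0 := by
  classical
  refine (bas a b).ext fun w => ?_
  have hL : ((Ideal.Quotient.mk (monIdeal K a b) (monomial p 1)) • E (K := K) a b u) ((bas a b) w)
      = if u = p + w.1 then 1 else 0 := by
    rw [dual_smul_apply, bas_apply, ← map_mul, monomial_mul, one_mul]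
    by_cases hpw : p + w.1 ∈ Dlt a b
    · rw [← bas_apply a b ⟨p + w.1, hpw⟩, E_apply_bas a b hu]
    · rw [mk_monomial_eq_zero a b hpw, map_zero, if_neg]
      intro hc; exact hpw (hc ▸ hu)
  have hR : (if p 0 ≤ u 0 ∧ p 1 ≤ u 1 then E (K := K) a b (u - p) else 0) ((bas a b) w)
      = if (p 0 ≤ u 0 ∧ p 1 ≤ u 1) ∧ u - p = w.1 then 1 else 0 := by
    by_cases hle : p 0 ≤ u 0 ∧ p 1 ≤ u 1
    · rw [if_pos hle, E_apply_bas a b (Dlt_sub a b hu p)]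
      by_cases h2 : u - p = w.1
      · rw [if_pos h2, if_pos ⟨hle, h2⟩]
      · rw [if_neg h2, if_neg (fun hc => h2 hc.2)]
    · rw [if_neg hle, LinearMap.zero_apply, if_neg (fun hc => hle hc.1)]
  rw [hL, hR]
  by_cases h : u = p + w.1
  · rw [if_pos h, if_pos]
    rw [finsupp_eq_iff] at h
    simp only [Finsupp.add_apply] at h
    refine ⟨⟨by omega, by omega⟩, ?_⟩
    rw [finsupp_eq_iff]
    simp only [Finsupp.tsub_apply]
    omega
  · rw [if_neg h, if_neg]
    rintro ⟨⟨h1, h2⟩, h3⟩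
    apply h
    rw [finsupp_eq_iff] at h3 ⊢
    simp only [Finsupp.tsub_apply] at h3
    simp only [Finsupp.add_apply]
    omega

end St
end chunk3

section chunk4
open MvPolynomial
namespace St
variable {K : Type*} [Field K] {n : ℕ} (a b : Fin (n+1) → ℕ)

/-- The corner monomial for index `i`. -/
noncomputable def cor (i : Fin n) : Fin 2 →₀ ℕ := pt (a i.castSucc - 1) (b i.succ - 1)

variable (ha : StrictAnti a) (hb : StrictMono b) (hA : a (Fin.last n) = 0) (hB : b 0 = 0)

include ha in
lemma anti_gap : ∀ (k : ℕ) (i j : Fin (n+1)), i.val + k = j.val → a j + k ≤ a i := by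
  intro k
  induction k with
  | zero => intro i j h; have : i = j := Fin.ext (by omega); subst this; omega
  | succ k IH =>
    intro i j h
    have hj' : i.val + k < n + 1 := by omega
    have h1 := IH i ⟨i.val + k, hj'⟩ rfl
    have h2 : a j < a ⟨i.val + k, hj'⟩ := ha (by simp [Fin.lt_def]; omega)
    omega

include hb in
lemma mono_gap : ∀ (k : ℕ) (i j : Fin (n+1)), i.val + k = j.val → b i + k ≤ b j := by
  intro k
  induction k with
  | zero => intro i j h; have : i = j := Fin.ext (by omega); subst this; omega
  | succ k IH =>
    intro i j h
    have hj' : i.val + k < n + 1 := by omega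
    have h1 := IH i ⟨i.val + k, hj'⟩ rfl
    have h2 : b ⟨i.val + k, hj'⟩ < b j := hb (by simp [Fin.lt_def]; omega)
    omega

include ha hA in
lemma a_lb (i : Fin (n+1)) : n - i.val ≤ a i := by
  have := anti_gap a ha (n - i.val) i (Fin.last n) (by simp; omega)
  rw [hA] at this; omega

include hb hB in
lemma b_lb (i : Fin (n+1)) : i.val ≤ b i := by
  have := mono_gap b hb i.val 0 i (by simp)
  rw [hB] at this; omega

include ha hb hA hB in
lemma cor_mem (i : Fin n) : cor a b i ∈ Dlt a b := by
  intro j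
  have hiv : i.val < n := i.isLt
  rcases le_or_gt j.val i.val with h | h
  · left
    have h1 := anti_gap a ha (i.val - j.val) j i.castSucc (by simp only [Fin.coe_castSucc]; omega)
    have h2 := anti_gap a ha (n - i.val) i.castSucc (Fin.last n)
      (by simp only [Fin.coe_castSucc, Fin.val_last]; omega)
    rw [hA] at h2
    simp only [cor, pt_apply0]
    omega
  · right
    have h1 := mono_gap b hb (j.val - (i.val+1)) i.succ j (by simp only [Fin.val_succ]; omega)
    have h2 := mono_gap b hb (i.val+1) 0 i.succ (by simp only [Fin.val_succ, Fin.val_zero]; omega)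
    rw [hB] at h2
    simp only [cor, pt_apply1]
    omega

include hA hB in
lemma exists_corner {v : Fin 2 →₀ ℕ} (hv : v ∈ Dlt a b) :
    ∃ i : Fin n, v 0 < a i.castSucc ∧ v 1 < b i.succ := by
  classical
  set F : Finset (Fin (n+1)) := Finset.univ.filter (fun i => b i ≤ v 1) with hF
  have h0 : (0 : Fin (n+1)) ∈ F := by simp [hF, hB]
  have hne : F.Nonempty := ⟨0, h0⟩
  set i' := F.max' hne with hi'
  have hmem : i' ∈ F := F.max'_mem hne
  have hbi : b i' ≤ v 1 := by simpa [hF] using hmem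
  have hlast : i'.val < n := by
    by_contra hc
    have : i' = Fin.last n := Fin.ext (by have := i'.isLt; simp; omega)
    rcases hv (Fin.last n) with h | h
    · rw [hA] at h; omega
    · rw [this] at hbi; omega
  refine ⟨⟨i'.val, hlast⟩, ?_, ?_⟩
  · rcases hv i' with h | h
    · simpa using h
    · omega
  · by_contra hc
    push_neg at hc
    have : (⟨i'.val, hlast⟩ : Fin n).succ ∈ F := by simp [hF]; exact hc
    have h5 := F.le_max' _ this
    rw [← hi'] at h5
    simp [Fin.le_def] at h5

variable (φ : Module.Dual K (MvPolynomial (Fin 2) K ⧸ monIdeal K a b)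
    →ₗ[MvPolynomial (Fin 2) K ⧸ monIdeal K a b] (MvPolynomial (Fin 2) K ⧸ monIdeal K a b))

lemma balance (f g : Module.Dual K (MvPolynomial (Fin 2) K ⧸ monIdeal K a b))
    (r : MvPolynomial (Fin 2) K ⧸ monIdeal K a b) :
    (r • g) (φ f) = g (φ (r • f)) := by
  rw [dual_smul_apply, map_smul, smul_eq_mul]

lemma E_eq_smul {w cj : Fin 2 →₀ ℕ} (hcj : cj ∈ Dlt a b)
    (hle : w 0 ≤ cj 0 ∧ w 1 ≤ cj 1) :
    E (K := K) a b w = (Ideal.Quotient.mk (monIdeal K a b) (monomial (cj - w) 1)) • E (K := K) a b cj := by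
  rw [smul_E a b _ hcj, if_pos]
  · congr 1
    rw [finsupp_eq_iff]
    simp only [Finsupp.tsub_apply]
    omega
  · simp only [Finsupp.tsub_apply]
    omega

/-- Move a factor out of the second (evaluation) slot. -/
lemma stepG (f : Module.Dual K (MvPolynomial (Fin 2) K ⧸ monIdeal K a b))
    {w cj : Fin 2 →₀ ℕ} (hcj : cj ∈ Dlt a b) (hle : w 0 ≤ cj 0 ∧ w 1 ≤ cj 1) :
    E (K := K) a b w (φ f) =
      E (K := K) a b cj (φ ((Ideal.Quotient.mk (monIdeal K a b) (monomial (cj - w) 1)) • f)) := by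
  rw [E_eq_smul a b hcj hle, balance a b φ]

/-- Move a factor out of the first slot. -/
lemma stepF (g : Module.Dual K (MvPolynomial (Fin 2) K ⧸ monIdeal K a b))
    {w ck : Fin 2 →₀ ℕ} (hck : ck ∈ Dlt a b) (hle : w 0 ≤ ck 0 ∧ w 1 ≤ ck 1) :
    g (φ (E (K := K) a b w)) =
      ((Ideal.Quotient.mk (monIdeal K a b) (monomial (ck - w) 1)) • g) (φ (E (K := K) a b ck)) := by
  rw [E_eq_smul a b hck hle, ← balance a b φ]

end St
end chunk4

section chunk5
open MvPolynomial
namespace St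
variable {K : Type*} [Field K] {n : ℕ} (a b : Fin (n+1) → ℕ)
variable (ha : StrictAnti a) (hb : StrictMono b) (hA : a (Fin.last n) = 0) (hB : b 0 = 0)

include ha in
lemma aa (i j : Fin n) (h : i.val ≤ j.val) : a j.castSucc + (j.val - i.val) ≤ a i.castSucc :=
  anti_gap a ha (j.val - i.val) i.castSucc j.castSucc (by simp only [Fin.coe_castSucc]; omega)

include hb in
lemma bb (i j : Fin n) (h : i.val ≤ j.val) : b i.succ + (j.val - i.val) ≤ b j.succ :=
  mono_gap b hb (j.val - i.val) i.succ j.succ (by simp only [Fin.val_succ]; omega)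

include ha hA in
lemma apos (j : Fin n) : n - j.val ≤ a j.castSucc := by
  have := a_lb a ha hA j.castSucc
  simpa using this

include hb hB in
lemma bpos (j : Fin n) : j.val + 1 ≤ b j.succ := by
  have := b_lb b hb hB j.succ
  simpa using this

include ha hb hA hB in
lemma pt00_mem (hn : 1 ≤ n) : pt 0 0 ∈ Dlt a b := by
  intro j
  rcases Nat.lt_or_ge j.val n with h | h
  · left
    have h1 := a_lb a ha hA j
    simp only [pt_apply0]; omega
  · right
    have h1 := b_lb b hb hB j
    simp only [pt_apply1]; omega

include ha hb hA hB in
lemma pt10_mem (hn : 2 ≤ n) : pt 1 0 ∈ Dlt a b := by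
  intro j
  rcases Nat.eq_zero_or_pos j.val with h | h
  · left
    have h1 := a_lb a ha hA j
    simp only [pt_apply0]; omega
  · right
    have h1 := b_lb b hb hB j
    simp only [pt_apply1]; omega

include ha hb hA hB in
lemma pt01_mem (hn : 2 ≤ n) : pt 0 1 ∈ Dlt a b := by
  intro j
  rcases Nat.lt_or_ge j.val n with h | h
  · left
    have h1 := a_lb a ha hA j
    simp only [pt_apply0]; omega
  · right
    have h1 := b_lb b hb hB j
    simp only [pt_apply1]; omega

variable (φ : Module.Dual K (MvPolynomial (Fin 2) K ⧸ monIdeal K a b)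
    →ₗ[MvPolynomial (Fin 2) K ⧸ monIdeal K a b] (MvPolynomial (Fin 2) K ⧸ monIdeal K a b))

include ha hb hA hB in
lemma kill (i j : Fin n) {u : Fin 2 →₀ ℕ}
    (h1 : u 0 + 1 ≤ a j.castSucc) (h2 : u 1 + 1 ≤ b j.succ)
    (hnot : ¬(a j.castSucc - 1 - u 0 ≤ a i.castSucc - 1 ∧
      b j.succ - 1 - u 1 ≤ b i.succ - 1)) :
    E (K := K) a b u (φ (E (K := K) a b (cor a b i))) = 0 := by
  rw [stepG a b φ _ (cor_mem a b ha hb hA hB j)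
    (by simp only [cor, pt_apply0, pt_apply1]; omega)]
  rw [smul_E a b _ (cor_mem a b ha hb hA hB i), if_neg, map_zero, map_zero]
  simp only [cor, Finsupp.tsub_apply, pt_apply0, pt_apply1]
  exact hnot

include ha hb hA hB in
lemma chainStep (i j : Fin n) {u : Fin 2 →₀ ℕ}
    (h1 : u 0 + 1 ≤ a j.castSucc) (h2 : u 1 + 1 ≤ b j.succ)
    (hyes : a j.castSucc - 1 - u 0 ≤ a i.castSucc - 1 ∧
      b j.succ - 1 - u 1 ≤ b i.succ - 1) :
    E (K := K) a b u (φ (E (K := K) a b (cor a b i))) =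
      E (K := K) a b (cor a b j)
        (φ (E (K := K) a b (cor a b i - (cor a b j - u)))) := by
  rw [stepG a b φ _ (cor_mem a b ha hb hA hB j)
    (by simp only [cor, pt_apply0, pt_apply1]; omega)]
  rw [smul_E a b _ (cor_mem a b ha hb hA hB i), if_pos]
  simp only [cor, Finsupp.tsub_apply, pt_apply0, pt_apply1]
  exact hyes

include ha hb hA hB in
lemma killF (j k : Fin n) {w : Fin 2 →₀ ℕ}
    (h1 : w 0 ≤ a k.castSucc - 1) (h2 : w 1 ≤ b k.succ - 1)
    (hnot : ¬(a k.castSucc - 1 - w 0 ≤ a j.castSucc - 1 ∧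
      b k.succ - 1 - w 1 ≤ b j.succ - 1)) :
    E (K := K) a b (cor a b j) (φ (E (K := K) a b w)) = 0 := by
  rw [stepF a b φ _ (cor_mem a b ha hb hA hB k)
    (by simp only [cor, pt_apply0, pt_apply1]; omega)]
  rw [smul_E a b _ (cor_mem a b ha hb hA hB j), if_neg, LinearMap.zero_apply]
  simp only [cor, Finsupp.tsub_apply, pt_apply0, pt_apply1]
  exact hnot

include ha hb hA hB in
lemma corner_vanish (hn3 : 3 ≤ n) (i : Fin n) {u : Fin 2 →₀ ℕ}
    (hu : u = pt 0 0 ∨ u = pt 1 0 ∨ u = pt 0 1) :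
    E (K := K) a b u (φ (E (K := K) a b (cor a b i))) = 0 := by
  have hiv : i.val < n := i.isLt
  rcases hu with rfl | rfl | rfl
  · -- u = (0,0)
    by_cases hi0 : i.val = 0
    · set j : Fin n := ⟨1, by omega⟩ with hjdef
      have hjv : (j : ℕ) = 1 := rfl
      have f1 := apos a ha hA j
      have f2 := bpos b hb hB j
      have f3 := bb b hb i j (by omega)
      have f4 := bpos b hb hB i
      refine kill a b ha hb hA hB φ i j ?_ ?_ ?_
      · simp only [pt_apply0]; omega
      · simp only [pt_apply1]; omega
      · simp only [pt_apply0, pt_apply1]; omega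
    · set j : Fin n := ⟨0, by omega⟩ with hjdef
      have hjv : (j : ℕ) = 0 := rfl
      have f1 := apos a ha hA j
      have f2 := bpos b hb hB j
      have f3 := aa a ha j i (by omega)
      have f4 := apos a ha hA i
      refine kill a b ha hb hA hB φ i j ?_ ?_ ?_
      · simp only [pt_apply0]; omega
      · simp only [pt_apply1]; omega
      · simp only [pt_apply0, pt_apply1]; omega
  · -- u = (1,0)
    by_cases hc1 : i.val + 3 ≤ n
    · set j : Fin n := ⟨i.val + 1, by omega⟩ with hjdef
      have hjv : (j : ℕ) = i.val + 1 := rfl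
      have f1 := apos a ha hA j
      have f2 := bpos b hb hB j
      have f3 := bb b hb i j (by omega)
      have f4 := bpos b hb hB i
      refine kill a b ha hb hA hB φ i j ?_ ?_ ?_
      · simp only [pt_apply0]; omega
      · simp only [pt_apply1]; omega
      · simp only [pt_apply0, pt_apply1]; omega
    · by_cases hc2 : 2 ≤ i.val
      · set j : Fin n := ⟨i.val - 2, by omega⟩ with hjdef
        have hjv : (j : ℕ) = i.val - 2 := rfl
        have f1 := aa a ha j i (by omega)
        have f2 := apos a ha hA i
        have f3 := bpos b hb hB j
        refine kill a b ha hb hA hB φ i j ?_ ?_ ?_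
        · simp only [pt_apply0]; omega
        · simp only [pt_apply1]; omega
        · simp only [pt_apply0, pt_apply1]; omega
      · -- i = 1, n = 3 : chain with j = i-1, k = i+1
        set j : Fin n := ⟨i.val - 1, by omega⟩ with hjdef
        set k : Fin n := ⟨i.val + 1, by omega⟩ with hkdef
        have hjv : (j : ℕ) = i.val - 1 := rfl
        have hkv : (k : ℕ) = i.val + 1 := rfl
        have f1 := aa a ha j i (by omega)
        have f2 := apos a ha hA i
        have f3 := bpos b hb hB j
        have f4 := bb b hb i k (by omega)
        have f5 := bb b hb j i (by omega)
        have f6 := bpos b hb hB i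
        by_cases hyes : a j.castSucc - 1 - (pt 1 0) 0 ≤ a i.castSucc - 1 ∧
            b j.succ - 1 - (pt 1 0) 1 ≤ b i.succ - 1
        · rw [chainStep a b ha hb hA hB φ i j
            (by simp only [pt_apply0]; omega) (by simp only [pt_apply1]; omega) hyes]
          refine killF a b ha hb hA hB φ j k ?_ ?_ ?_
          · simp only [cor, Finsupp.tsub_apply, pt_apply0, pt_apply1]
            omega
          · simp only [cor, Finsupp.tsub_apply, pt_apply0, pt_apply1]
            omega
          · simp only [pt_apply0, pt_apply1] at hyes
            simp only [cor, Finsupp.tsub_apply, pt_apply0, pt_apply1]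
            omega
        · exact kill a b ha hb hA hB φ i j
            (by simp only [pt_apply0]; omega)
            (by simp only [pt_apply1]; omega) hyes
  · -- u = (0,1)
    by_cases hc1 : 2 ≤ i.val
    · set j : Fin n := ⟨i.val - 1, by omega⟩ with hjdef
      have hjv : (j : ℕ) = i.val - 1 := rfl
      have f1 := aa a ha j i (by omega)
      have f2 := apos a ha hA i
      have f3 := bpos b hb hB j
      refine kill a b ha hb hA hB φ i j ?_ ?_ ?_
      · simp only [pt_apply0]; omega
      · simp only [pt_apply1]; omega
      · simp only [pt_apply0, pt_apply1]; omega
    · by_cases hc2 : i.val + 3 ≤ n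
      · set j : Fin n := ⟨i.val + 2, by omega⟩ with hjdef
        have hjv : (j : ℕ) = i.val + 2 := rfl
        have f1 := apos a ha hA j
        have f2 := bpos b hb hB j
        have f3 := bb b hb i j (by omega)
        have f4 := bpos b hb hB i
        refine kill a b ha hb hA hB φ i j ?_ ?_ ?_
        · simp only [pt_apply0]; omega
        · simp only [pt_apply1]; omega
        · simp only [pt_apply0, pt_apply1]; omega
      · -- i = 1, n = 3 : chain with j = i+1, k = i-1
        set j : Fin n := ⟨i.val + 1, by omega⟩ with hjdef
        set k : Fin n := ⟨i.val - 1, by omega⟩ with hkdef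
        have hjv : (j : ℕ) = i.val + 1 := rfl
        have hkv : (k : ℕ) = i.val - 1 := rfl
        have f1 := aa a ha i j (by omega)
        have f2 := aa a ha k i (by omega)
        have f3 := bb b hb i j (by omega)
        have f4 := bpos b hb hB k
        have f5 := bpos b hb hB j
        have f6 := apos a ha hA j
        have f7 := apos a ha hA i
        by_cases hyes : a j.castSucc - 1 - (pt 0 1) 0 ≤ a i.castSucc - 1 ∧
            b j.succ - 1 - (pt 0 1) 1 ≤ b i.succ - 1
        · rw [chainStep a b ha hb hA hB φ i j
            (by simp only [pt_apply0]; omega) (by simp only [pt_apply1]; omega) hyes]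
          refine killF a b ha hb hA hB φ j k ?_ ?_ ?_
          · simp only [cor, Finsupp.tsub_apply, pt_apply0, pt_apply1]
            omega
          · simp only [cor, Finsupp.tsub_apply, pt_apply0, pt_apply1]
            omega
          · simp only [pt_apply0, pt_apply1] at hyes
            simp only [cor, Finsupp.tsub_apply, pt_apply0, pt_apply1]
            omega
        · exact kill a b ha hb hA hB φ i j
            (by simp only [pt_apply0]; omega)
            (by simp only [pt_apply1]; omega) hyes

end St
end chunk5

section chunk6
open MvPolynomial
namespace St
variable {K : Type*} [Field K] {n : ℕ} (a b : Fin (n+1) → ℕ)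
variable (ha : StrictAnti a) (hb : StrictMono b) (hA : a (Fin.last n) = 0) (hB : b 0 = 0)

lemma small_sub {u q : Fin 2 →₀ ℕ}
    (hu : u = pt 0 0 ∨ u = pt 1 0 ∨ u = pt 0 1) :
    u - q = pt 0 0 ∨ u - q = pt 1 0 ∨ u - q = pt 0 1 := by
  have h := eq_pt (u - q)
  rw [Finsupp.tsub_apply, Finsupp.tsub_apply] at h
  have h0 : u 0 ≤ 1 ∧ u 1 ≤ 1 ∧ u 0 + u 1 ≤ 1 := by
    rcases hu with rfl | rfl | rfl <;> simp
  rcases Nat.eq_zero_or_pos (u 0 - q 0) with e0 | e0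
  · rcases Nat.eq_zero_or_pos (u 1 - q 1) with e1 | e1
    · left; rw [h, e0, e1]
    · right; right
      have : u 1 - q 1 = 1 := by omega
      rw [h, e0, this]
  · right; left
    have h1 : u 0 - q 0 = 1 := by omega
    have h2 : u 1 - q 1 = 0 := by omega
    rw [h, h1, h2]

variable (φ : Module.Dual K (MvPolynomial (Fin 2) K ⧸ monIdeal K a b)
    →ₗ[MvPolynomial (Fin 2) K ⧸ monIdeal K a b] (MvPolynomial (Fin 2) K ⧸ monIdeal K a b))

include ha hb hA hB in
lemma vanish_basis (hn3 : 3 ≤ n) {v : Fin 2 →₀ ℕ} (hv : v ∈ Dlt a b)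
    {u : Fin 2 →₀ ℕ} (hu : u = pt 0 0 ∨ u = pt 1 0 ∨ u = pt 0 1) :
    E (K := K) a b u (φ (E (K := K) a b v)) = 0 := by
  obtain ⟨i, hv0, hv1⟩ := exists_corner a b hA hB hv
  have humem : u ∈ Dlt a b := by
    rcases hu with rfl | rfl | rfl
    · exact pt00_mem a b ha hb hA hB (by omega)
    · exact pt10_mem a b ha hb hA hB (by omega)
    · exact pt01_mem a b ha hb hA hB (by omega)
  rw [stepF a b φ _ (cor_mem a b ha hb hA hB i)
    (by simp only [cor, pt_apply0, pt_apply1]; omega)]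
  rw [smul_E a b _ humem]
  by_cases hle : (cor a b i - v) 0 ≤ u 0 ∧ (cor a b i - v) 1 ≤ u 1
  · rw [if_pos hle]
    exact corner_vanish a b ha hb hA hB φ hn3 i (small_sub hu)
  · rw [if_neg hle, LinearMap.zero_apply]

lemma ksmul_dual (k : K) (f : Module.Dual K (MvPolynomial (Fin 2) K ⧸ monIdeal K a b)) :
    k • f = (algebraMap K (MvPolynomial (Fin 2) K ⧸ monIdeal K a b) k) • f := by
  refine LinearMap.ext fun x => ?_
  rw [LinearMap.smul_apply, dual_smul_apply, ← Algebra.smul_def, map_smul]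

include ha hb hA hB in
lemma vanish_all (hn3 : 3 ≤ n)
    (f : Module.Dual K (MvPolynomial (Fin 2) K ⧸ monIdeal K a b))
    {u : Fin 2 →₀ ℕ} (hu : u = pt 0 0 ∨ u = pt 1 0 ∨ u = pt 0 1) :
    E (K := K) a b u (φ f) = 0 := by
  classical
  haveI : Finite ↥(Dlt a b) := (Dlt_finite a b hA hB).to_subtype
  have hf : f ∈ Submodule.span K (Set.range (bas a b).dualBasis) := by
    rw [Module.Basis.span_eq]; trivial
  refine Submodule.span_induction ?_ ?_ ?_ ?_ hf
  · rintro g ⟨v, rfl⟩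
    have : (bas a b).dualBasis v = E (K := K) a b v.1 := by
      rw [Module.Basis.coe_dualBasis, E, dif_pos v.2]
    rw [this]
    exact vanish_basis a b ha hb hA hB φ hn3 v.2 hu
  · rw [map_zero, map_zero]
  · intro g h _ _ hg hh
    rw [map_add, map_add, hg, hh, add_zero]
  · intro k g _ hg
    rw [ksmul_dual a b, map_smul, algebraMap_smul, map_smul, hg, smul_zero]

include ha hb hA hB in
lemma trace_vanish (hn3 : 3 ≤ n) {r : MvPolynomial (Fin 2) K ⧸ monIdeal K a b}
    (hr : r ∈ canTrace K (monIdeal K a b))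
    {u : Fin 2 →₀ ℕ} (hu : u = pt 0 0 ∨ u = pt 1 0 ∨ u = pt 0 1) :
    E (K := K) a b u r = 0 := by
  unfold canTrace traceIdeal at hr
  refine Submodule.iSup_induction (motive := fun s => E (K := K) a b u s = 0) _ hr ?_ ?_ ?_
  · rintro φ r ⟨f, rfl⟩
    exact vanish_all a b ha hb hA hB φ hn3 f hu
  · exact map_zero _
  · intro x y hx hy
    show E (K := K) a b u (x + y) = 0
    rw [map_add, hx, hy, add_zero]

end St
end chunk6

end StAux

/-- A nearly Gorenstein Cohen–Macaulay monomial ideal of `K[x,y]` has at most `3`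
generators. -/
theorem stmt18 {K : Type*} [Field K] (n : ℕ) (hn : 1 ≤ n) (a b : Fin (n + 1) → ℕ)
    (ha : StrictAnti a) (hb : StrictMono b)
    (hA : a (Fin.last n) = 0) (hB : b 0 = 0)
    (hNG : Ideal.span {Ideal.Quotient.mk (monIdeal K a b) (MvPolynomial.X 0),
        Ideal.Quotient.mk (monIdeal K a b) (MvPolynomial.X 1)} ≤
      canTrace K (monIdeal K a b)) :
    n + 1 ≤ 3 := by
  by_contra hcon
  have hn3 : 3 ≤ n := by omega
  have hx : Ideal.Quotient.mk (monIdeal K a b) (MvPolynomial.X 0) ∈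
      canTrace K (monIdeal K a b) :=
    hNG (Ideal.subset_span (Set.mem_insert _ _))
  have h0 := St.trace_vanish a b ha hb hA hB hn3 hx (Or.inr (Or.inl rfl))
  have hmem : St.pt 1 0 ∈ St.Dlt a b := St.pt10_mem a b ha hb hA hB (by omega)
  have hX : (MvPolynomial.X 0 : MvPolynomial (Fin 2) K) =
      MvPolynomial.monomial (St.pt 1 0) 1 := by
    have := St.X_pow_mul_X_pow K 1 0
    simpa using this
  rw [hX, ← St.bas_apply a b ⟨St.pt 1 0, hmem⟩, St.E_apply_bas a b hmem, if_pos rfl] at h0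
  exact one_ne_zero h0
end
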